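/- Let 𝒜 : 𝕊ⁿ → ℝ^m be a linear map, b ∈ ℝ^m, and P = {X ∈ 𝕊ⁿ : 𝒜(X) = b, X ⪰ 0} nonempty. Let X* ∈ P have maximum rank r among elements of P, assume X* = U Z* Uᵀ with U = [[I_r],[U₀]] and Z* ≻ 0, and set Y_U = −U₀ᵀ. Define Ω* = {X ∈ 𝕊ⁿ : ‖X − X*‖₂ < σ_r(X*)} and 𝒲(ℝ) = {X ∈ 𝕊ⁿ : 𝒜(X) = b and ∃Y ∈ ℝ^{r×(n-r)} with X·[[Y],[I_{n-r}]] = 0}. Then P ∩ Ω* = 𝒲(ℝ) ∩ Ω*. -/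

import Mathlib

open Matrix
open scoped Matrix.Norms.L2Operator

/-- `svals A i` is the `(i+1)`-th largest singular value of `A`. -/
noncomputable def svals {p q : Type*} [Fintype p] [Fintype q] [DecidableEq q]
    (A : Matrix p q ℝ) (i : ℕ) : ℝ :=
  if h : i < Fintype.card q then
    Real.sqrt ((show (Aᵀ * A).IsHermitian by simpa [Matrix.conjTranspose_eq_transpose_of_trivial] using Matrix.isHermitian_conjTranspose_mul_self A).eigenvalues₀
      (Tuple.sort (show (Aᵀ * A).IsHermitian by simpa [Matrix.conjTranspose_eq_transpose_of_trivial] using Matrix.isHermitian_conjTranspose_mul_self A).eigenvalues₀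
        ⟨Fintype.card q - 1 - i, by omega⟩))
  else 0

lemma FRaux.mono_zeros {N : ℕ} (g : Fin N → ℝ) (hg : Monotone g) (hnn : ∀ j, 0 ≤ g j)
    {c : ℕ} (hcard : (Finset.univ.filter (fun j => g j ≠ 0)).card = c) {j : Fin N} (hj : g j ≠ 0) :
    N - c ≤ (j : ℕ) := by
  by_contra h
  push_neg at h
  have hsub : Finset.Ici j ⊆ Finset.univ.filter (fun j => g j ≠ 0) := by
    intro j' hj'
    simp only [Finset.mem_Ici] at hj'
    simp only [Finset.mem_filter, Finset.mem_univ, true_and]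
    have : 0 < g j := lt_of_le_of_ne (hnn j) (Ne.symm hj)
    exact ne_of_gt (lt_of_lt_of_le this (hg hj'))
  have := Finset.card_le_card hsub
  rw [hcard, Fin.card_Ici] at this
  omega

lemma FRaux.eigenvalues₀_eq {n : Type*} [Fintype n] [DecidableEq n] {B : Matrix n n ℝ}
    (hB : B.IsHermitian) (j : Fin (Fintype.card n)) :
    hB.eigenvalues₀ j = hB.eigenvalues ((Fintype.equivOfCardEq (Fintype.card_fin _)) j) := by
  simp [Matrix.IsHermitian.eigenvalues]

lemma FRaux.svals_spec {n : Type*} [Fintype n] [DecidableEq n]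
    {Xs : Matrix n n ℝ} (hXs : Xs.PosSemidef) {r : ℕ} (hr : 1 ≤ r)
    (hrank : Xs.rank = r) (hrN : r ≤ Fintype.card n) :
    0 ≤ svals Xs (r-1) ∧
      ∀ i, hXs.1.eigenvalues i ≠ 0 → svals Xs (r-1) ≤ hXs.1.eigenvalues i := by
  classical
  set N := Fintype.card n with hN
  have hB : (Xsᵀ * Xs).IsHermitian := by simpa [Matrix.conjTranspose_eq_transpose_of_trivial] using Matrix.isHermitian_conjTranspose_mul_self Xs
  have hT : Xsᵀ = Xsᴴ := (Matrix.conjTranspose_eq_transpose_of_trivial Xs).symm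
  have hBpsd : (Xsᵀ * Xs).PosSemidef := by
    rw [hT]; exact Matrix.posSemidef_conjTranspose_mul_self Xs
  have hνnn : ∀ i, 0 ≤ hB.eigenvalues i := fun i => hBpsd.eigenvalues_nonneg i
  have hcount : Fintype.card {i // hB.eigenvalues i ≠ 0} = r := by
    rw [← hB.rank_eq_card_non_zero_eigs, Matrix.rank_transpose_mul_self, hrank]
  set e : Fin N ≃ n := Fintype.equivOfCardEq (Fintype.card_fin _) with he
  set ν₀ : Fin N → ℝ := hB.eigenvalues₀ with hν₀
  set g : Fin N → ℝ := ν₀ ∘ Tuple.sort ν₀ with hg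
  have hgmono : Monotone g := Tuple.monotone_sort ν₀
  have hν₀e : ∀ j, ν₀ j = hB.eigenvalues (e j) := fun j => FRaux.eigenvalues₀_eq hB j
  have hgnn : ∀ j, 0 ≤ g j := fun j => by
    rw [hg]; simp only [Function.comp_apply, hν₀e]; exact hνnn _
  have hgcard : (Finset.univ.filter (fun j => g j ≠ 0)).card = r := by
    rw [← hcount, ← Fintype.card_subtype]
    refine Fintype.card_congr (Equiv.subtypeEquiv ((Tuple.sort ν₀).trans e) ?_)
    intro j
    rw [hg]
    simp only [Function.comp_apply, Equiv.trans_apply]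
    rw [hν₀e]
  have hlt : N - 1 - (r - 1) < N := by omega
  have hidx : N - 1 - (r-1) = N - r := by omega
  have hsv : svals Xs (r-1) = Real.sqrt (g ⟨N - r, by omega⟩) := by
    rw [svals, dif_pos (by omega : r - 1 < Fintype.card n)]
    have hfin : (⟨Fintype.card n - 1 - (r - 1), by omega⟩ : Fin (Fintype.card n)) =
        (⟨N - r, by omega⟩ : Fin N) := Fin.ext hidx
    rw [hfin]
    rfl
  constructor
  · rw [hsv]; exact Real.sqrt_nonneg _
  · intro i hi
    set lam := hXs.1.eigenvalues i with hlam
    have hv := hXs.1.mulVec_eigenvectorBasis i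
    set v : n → ℝ := ⇑(hXs.1.eigenvectorBasis i) with hvdef
    have hvne : v ≠ 0 := by
      intro h0; apply hXs.1.eigenvectorBasis.orthonormal.ne_zero i; ext j; exact congr_fun h0 j
    have hBv : (Xsᵀ * Xs) *ᵥ v = (lam^2) • v := by
      rw [← Matrix.mulVec_mulVec, hv, Matrix.mulVec_smul, hT, hXs.1, hv, smul_smul, pow_two]
    set Q : Matrix n n ℝ := (hB.eigenvectorUnitary : Matrix n n ℝ) with hQ
    have hQ1 : Q * star Q = 1 := (Matrix.mem_unitaryGroup_iff).mp hB.eigenvectorUnitary.2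
    have hQ1' : star Q * Q = 1 := (Matrix.mem_unitaryGroup_iff').mp hB.eigenvectorUnitary.2
    set c : n → ℝ := star Q *ᵥ v with hc
    have hcne : c ≠ 0 := by
      intro h0
      apply hvne
      have : Q *ᵥ c = v := by
        rw [hc, Matrix.mulVec_mulVec, hQ1, Matrix.one_mulVec]
      rw [h0, Matrix.mulVec_zero] at this
      exact this.symm
    have hst : (Xsᵀ * Xs) = Q * diagonal hB.eigenvalues * star Q := by
      have := hB.spectral_theorem
      simpa using this
    have hdiag : diagonal hB.eigenvalues *ᵥ c = (lam^2) • c := by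
      have h1 : star Q *ᵥ ((Q * diagonal hB.eigenvalues * star Q) *ᵥ v) = (lam^2) • c := by
        rw [← hst, hBv, Matrix.mulVec_smul]
      rw [Matrix.mulVec_mulVec, ← Matrix.mul_assoc, ← Matrix.mul_assoc, hQ1', Matrix.one_mul,
        ← Matrix.mulVec_mulVec] at h1
      exact h1
    obtain ⟨i₀, hi₀⟩ := Function.ne_iff.mp hcne
    have hv0 : hB.eigenvalues i₀ = lam^2 := by
      have := congr_fun hdiag i₀
      rw [Matrix.mulVec_diagonal] at this
      simp only [Pi.smul_apply, smul_eq_mul] at this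
      exact mul_right_cancel₀ hi₀ this
    have hne0 : hB.eigenvalues i₀ ≠ 0 := by
      rw [hv0]; exact pow_ne_zero 2 hi
    set j' : Fin N := (Tuple.sort ν₀)⁻¹ (e.symm i₀) with hj'
    have hgj' : g j' = hB.eigenvalues i₀ := by
      rw [hg]; simp only [Function.comp_apply, hj']
      rw [show (Tuple.sort ν₀) ((Tuple.sort ν₀)⁻¹ (e.symm i₀)) = e.symm i₀ from
        Equiv.apply_symm_apply _ _]
      rw [hν₀e, Equiv.apply_symm_apply]
    have hgj'ne : g j' ≠ 0 := by rw [hgj']; exact hne0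
    have hge := FRaux.mono_zeros g hgmono hgnn hgcard hgj'ne
    have hmono := hgmono (show (⟨N - r, by omega⟩ : Fin N) ≤ j' from hge)
    rw [hsv]
    have hlamnn : 0 ≤ lam := hXs.eigenvalues_nonneg i
    calc Real.sqrt (g ⟨N - r, by omega⟩) ≤ Real.sqrt (g j') := Real.sqrt_le_sqrt hmono
      _ = Real.sqrt (lam^2) := by rw [hgj', hv0]
      _ = lam := by rw [Real.sqrt_sq hlamnn]

lemma FRaux.svals_nonpos_of_rank_zero {n : Type*} [Fintype n] [DecidableEq n]
    {Xs : Matrix n n ℝ} (h : Xs.rank = 0) (i : ℕ) : svals Xs i ≤ 0 := by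
  rw [svals]
  split
  · next h' =>
    have hB : (Xsᵀ * Xs).IsHermitian := by simpa [Matrix.conjTranspose_eq_transpose_of_trivial] using Matrix.isHermitian_conjTranspose_mul_self Xs
    have hcount : Fintype.card {i // hB.eigenvalues i ≠ 0} = 0 := by
      rw [← hB.rank_eq_card_non_zero_eigs, Matrix.rank_transpose_mul_self, h]
    have hall : ∀ i, hB.eigenvalues i = 0 := by
      intro i
      by_contra hne
      exact (Fintype.card_eq_zero_iff.mp hcount).elim ⟨i, hne⟩
    rw [FRaux.eigenvalues₀_eq, hall, Real.sqrt_zero]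
  · exact le_refl 0

lemma FRaux.quad_lower {n : Type*} [Fintype n] [DecidableEq n] {Xs : Matrix n n ℝ}
    (hXs : Xs.PosSemidef) {σ : ℝ}
    (hσ : ∀ i, hXs.1.eigenvalues i ≠ 0 → σ ≤ hXs.1.eigenvalues i) (u : n → ℝ) :
    σ * ((Xs *ᵥ u) ⬝ᵥ (Xs *ᵥ u)) ≤ (Xs *ᵥ u) ⬝ᵥ (Xs *ᵥ (Xs *ᵥ u)) := by
  classical
  set lam := hXs.1.eigenvalues with hlam
  set Q : Matrix n n ℝ := (hXs.1.eigenvectorUnitary : Matrix n n ℝ) with hQdef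
  have hQ1' : star Q * Q = 1 := (Matrix.mem_unitaryGroup_iff').mp hXs.1.eigenvectorUnitary.2
  have hsp : Xs = Q * diagonal lam * star Q := by simpa using hXs.1.spectral_theorem
  set d : n → ℝ := star Q *ᵥ u with hd
  set c : n → ℝ := diagonal lam *ᵥ d with hc
  have hv : Xs *ᵥ u = Q *ᵥ c := by
    rw [hsp, hc, hd, ← Matrix.mulVec_mulVec, ← Matrix.mulVec_mulVec]
  have hXv : Xs *ᵥ (Xs *ᵥ u) = Q *ᵥ (diagonal lam *ᵥ c) := by
    rw [hv, hsp, Matrix.mulVec_mulVec, Matrix.mul_assoc (Q * diagonal lam), hQ1',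
      Matrix.mul_one, ← Matrix.mulVec_mulVec]
  have hQt : Qᵀ = star Q := by
    rw [Matrix.star_eq_conjTranspose, Matrix.conjTranspose_eq_transpose_of_trivial]
  have key : ∀ w : n → ℝ, (Q *ᵥ c) ⬝ᵥ (Q *ᵥ w) = c ⬝ᵥ w := by
    intro w
    rw [Matrix.dotProduct_mulVec, ← Matrix.vecMul_transpose, Matrix.vecMul_vecMul, hQt, hQ1',
      Matrix.vecMul_one]
  rw [hXv, hv, key, key]
  have hci : ∀ i, c i = lam i * d i := by
    intro i; rw [hc, Matrix.mulVec_diagonal]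
  simp only [dotProduct, Matrix.mulVec_diagonal]
  rw [Finset.mul_sum]
  refine Finset.sum_le_sum fun i _ => ?_
  by_cases h : lam i = 0
  · have hc0 : c i = 0 := by rw [hci, h, zero_mul]
    simp [hc0]
  · have h1 := hσ i h
    nlinarith [mul_self_nonneg (c i)]

lemma FRaux.opnorm_quad {n : Type*} [Fintype n] [DecidableEq n] (E : Matrix n n ℝ) (v : n → ℝ) :
    -(‖E‖ * (v ⬝ᵥ v)) ≤ v ⬝ᵥ (E *ᵥ v) := by
  set v' : EuclideanSpace ℝ n := (EuclideanSpace.equiv n ℝ).symm v with hv'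
  set w' : EuclideanSpace ℝ n := (EuclideanSpace.equiv n ℝ).symm (E *ᵥ v) with hw'
  have h1 : v ⬝ᵥ (E *ᵥ v) = @inner ℝ _ _ v' w' := by
    simp [PiLp.inner_apply, dotProduct, hv', hw', RCLike.inner_apply, mul_comm]
  have h2 : v ⬝ᵥ v = ‖v'‖ ^ 2 := by
    rw [EuclideanSpace.real_norm_sq_eq]
    simp [dotProduct, hv', sq]
  have h3 : ‖w'‖ ≤ ‖E‖ * ‖v'‖ := E.l2_opNorm_mulVec v'
  have h4 : |@inner ℝ _ _ v' w'| ≤ ‖v'‖ * ‖w'‖ := abs_real_inner_le_norm v' w'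
  rw [h1, h2]
  have h5 : -(‖v'‖ * ‖w'‖) ≤ @inner ℝ _ _ v' w' := neg_le_of_abs_le h4
  nlinarith [norm_nonneg v', norm_nonneg w']

lemma FRaux.smul_psd {n : Type*} [Fintype n] {M : Matrix n n ℝ} (hM : M.PosSemidef)
    {c : ℝ} (hc : 0 ≤ c) : (c • M).PosSemidef := by
  refine posSemidef_iff_dotProduct_mulVec.mpr ⟨?_, ?_⟩
  · have := hM.1
    rw [Matrix.IsHermitian, Matrix.conjTranspose_smul, star_trivial, this]
  · intro x
    have h := hM.dotProduct_mulVec_nonneg x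
    rw [Matrix.smul_mulVec, dotProduct_smul]
    exact mul_nonneg hc h

/-- Facial-reduction locality: with `P = {X : 𝒜X = b, X ⪰ 0}` nonempty, a maximum-rank
solution `X* = U Z* Uᵀ` with `U = [[I],[U₀]]`, `Z* ≻ 0`, and
`Ω* = {X : ‖X − X*‖₂ < σ_r(X*)}`, one has `P ∩ Ω* = 𝒲(ℝ) ∩ Ω*`, where
`𝒲(ℝ) = {X symmetric : 𝒜X = b, ∃Y, X·[[Y],[I]] = 0}`. -/
theorem stmt10 {r m k : ℕ}
    (A : Matrix (Fin r ⊕ Fin m) (Fin r ⊕ Fin m) ℝ →ₗ[ℝ] (Fin k → ℝ)) (b : Fin k → ℝ)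
    (U₀ : Matrix (Fin m) (Fin r) ℝ) (Zs : Matrix (Fin r) (Fin r) ℝ) (hZs : Zs.PosDef)
    (Xs : Matrix (Fin r ⊕ Fin m) (Fin r ⊕ Fin m) ℝ)
    (hXsdef : Xs = Matrix.fromRows (1 : Matrix (Fin r) (Fin r) ℝ) U₀ * Zs *
      (Matrix.fromRows (1 : Matrix (Fin r) (Fin r) ℝ) U₀)ᵀ)
    (hXsP : A Xs = b ∧ Xs.PosSemidef)
    (hmax : ∀ X : Matrix (Fin r ⊕ Fin m) (Fin r ⊕ Fin m) ℝ,
      A X = b → X.PosSemidef → X.rank ≤ r) :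
    {X : Matrix (Fin r ⊕ Fin m) (Fin r ⊕ Fin m) ℝ |
        (A X = b ∧ X.PosSemidef) ∧ ‖X - Xs‖ < svals Xs (r - 1)} =
      {X : Matrix (Fin r ⊕ Fin m) (Fin r ⊕ Fin m) ℝ |
        (X.IsHermitian ∧ A X = b ∧ ∃ Y : Matrix (Fin r) (Fin m) ℝ,
          X * Matrix.fromRows Y (1 : Matrix (Fin m) (Fin m) ℝ) = 0) ∧
        ‖X - Xs‖ < svals Xs (r - 1)} := by
  classical
  set U : Matrix (Fin r ⊕ Fin m) (Fin r) ℝ := Matrix.fromRows 1 U₀ with hU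
  set σ : ℝ := svals Xs (r - 1) with hσdef
  have hcard : Fintype.card (Fin r ⊕ Fin m) = r + m := by simp
  have hUt : Uᵀ = Matrix.fromCols 1 U₀ᵀ := by
    rw [hU, Matrix.transpose_fromRows, Matrix.transpose_one]
  set G : Matrix (Fin r) (Fin r) ℝ := 1 + U₀ᵀ * U₀ with hG
  have hUtU : Uᵀ * U = G := by
    rw [hUt, hU, Matrix.fromCols_mul_fromRows, Matrix.one_mul]
  have hGpd : G.PosDef := by
    rw [hG]
    refine Matrix.PosDef.add_posSemidef Matrix.PosDef.one ?_
    have := Matrix.posSemidef_conjTranspose_mul_self U₀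
    rwa [Matrix.conjTranspose_eq_transpose_of_trivial] at this
  have hGdet : IsUnit G.det := isUnit_iff_ne_zero.mpr (ne_of_gt hGpd.det_pos)
  have hZsdet : IsUnit Zs.det := isUnit_iff_ne_zero.mpr (ne_of_gt hZs.det_pos)
  have hXsU : Xs * U = U * (Zs * G) := by
    rw [hXsdef, Matrix.mul_assoc (U * Zs) Uᵀ U, hUtU, Matrix.mul_assoc U Zs G]
  have hrankXs : Xs.rank = r := by
    refine le_antisymm (hmax Xs hXsP.1 hXsP.2) ?_
    have h1 : Uᵀ * Xs * U = G * (Zs * G) := by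
      rw [Matrix.mul_assoc, hXsU, ← Matrix.mul_assoc, hUtU]
    have hunit : IsUnit (G * (Zs * G)) := (Matrix.isUnit_iff_isUnit_det _).mpr (by
      rw [Matrix.det_mul, Matrix.det_mul]
      exact hGdet.mul (hZsdet.mul hGdet))
    have h2 : (Uᵀ * Xs * U).rank = r := by
      rw [h1, Matrix.rank_of_isUnit _ hunit, Fintype.card_fin]
    calc r = (Uᵀ * Xs * U).rank := h2.symm
      _ ≤ (Xs * U).rank := by
          rw [Matrix.mul_assoc]; exact Matrix.rank_mul_le_right _ _
      _ ≤ Xs.rank := Matrix.rank_mul_le_left _ _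
  have hrange : ∀ w : Fin r → ℝ, ∃ u, Xs *ᵥ u = U *ᵥ w := by
    intro w
    have hdet : IsUnit (Zs * G).det := by rw [Matrix.det_mul]; exact hZsdet.mul hGdet
    refine ⟨U *ᵥ ((Zs * G)⁻¹ *ᵥ w), ?_⟩
    have hinv : (U * (Zs * G)) * (Zs * G)⁻¹ = U := by
      rw [Matrix.mul_assoc, Matrix.mul_nonsing_inv _ hdet, Matrix.mul_one]
    rw [Matrix.mulVec_mulVec, hXsU, Matrix.mulVec_mulVec, hinv]
  have hcol : ∀ (M : Matrix (Fin r ⊕ Fin m) (Fin r ⊕ Fin m) ℝ)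
      (V : Matrix (Fin r ⊕ Fin m) (Fin m) ℝ) (j : Fin m),
      M *ᵥ (fun i => V i j) = fun i => (M * V) i j := by
    intro M V j; funext i
    simp [Matrix.mulVec, Matrix.mul_apply, dotProduct]
  have hUtV : Uᵀ * Matrix.fromRows (-U₀ᵀ) (1 : Matrix (Fin m) (Fin m) ℝ) = 0 := by
    rw [hUt, Matrix.fromCols_mul_fromRows, Matrix.one_mul, Matrix.mul_one, neg_add_cancel]
  have hXsV : Xs * Matrix.fromRows (-U₀ᵀ) (1 : Matrix (Fin m) (Fin m) ℝ) = 0 := by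
    rw [hXsdef, Matrix.mul_assoc (U * Zs), hUtV, Matrix.mul_zero]
  have hfr : ∀ M : Matrix (Fin r ⊕ Fin m) (Fin r ⊕ Fin m) ℝ,
      M.rank + Module.finrank ℝ (LinearMap.ker M.mulVecLin) = r + m := by
    intro M
    have h := LinearMap.finrank_range_add_finrank_ker M.mulVecLin
    rw [Module.finrank_fintype_fun_eq_card, hcard] at h
    exact h
  have hkerXs : Module.finrank ℝ (LinearMap.ker Xs.mulVecLin) = m := by
    have := hfr Xs; rw [hrankXs] at this; omega
  ext X
  simp only [Set.mem_setOf_eq]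
  constructor
  · rintro ⟨⟨hAX, hpsd⟩, hnorm⟩
    refine ⟨⟨hpsd.1, hAX, ⟨-U₀ᵀ, ?_⟩⟩, hnorm⟩
    set S : Matrix (Fin r ⊕ Fin m) (Fin r ⊕ Fin m) ℝ := (2⁻¹ : ℝ) • (X + Xs) with hS
    have hSA : A S = b := by
      rw [hS, _root_.map_smul, map_add, hAX, hXsP.1]
      funext j
      simp
      ring
    have hSpsd : S.PosSemidef := FRaux.smul_psd (hpsd.add hXsP.2) (by norm_num)
    have hSrank := hmax S hSA hSpsd
    have hSker : ∀ v, S *ᵥ v = 0 → X *ᵥ v = 0 ∧ Xs *ᵥ v = 0 := by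
      intro v hv
      have hq : v ⬝ᵥ (S *ᵥ v) = 0 := by rw [hv, dotProduct_zero]
      have hexp : v ⬝ᵥ (S *ᵥ v) = 2⁻¹ * (v ⬝ᵥ (X *ᵥ v) + v ⬝ᵥ (Xs *ᵥ v)) := by
        rw [hS, Matrix.smul_mulVec, dotProduct_smul, Matrix.add_mulVec,
          dotProduct_add]
        simp
      have h1 : 0 ≤ v ⬝ᵥ (X *ᵥ v) := hpsd.dotProduct_mulVec_nonneg v
      have h2 : 0 ≤ v ⬝ᵥ (Xs *ᵥ v) := hXsP.2.dotProduct_mulVec_nonneg v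
      have hX0 : v ⬝ᵥ (X *ᵥ v) = 0 := by rw [hexp] at hq; linarith
      have hXs0 : v ⬝ᵥ (Xs *ᵥ v) = 0 := by rw [hexp] at hq; linarith
      exact ⟨(hpsd.dotProduct_mulVec_zero_iff v).mp (by simpa using hX0),
        (hXsP.2.dotProduct_mulVec_zero_iff v).mp (by simpa using hXs0)⟩
    have hle1 : LinearMap.ker S.mulVecLin ≤ LinearMap.ker Xs.mulVecLin := by
      intro v hv
      rw [LinearMap.mem_ker, Matrix.mulVecLin_apply] at hv ⊢
      exact (hSker v hv).2
    have hle2 : LinearMap.ker S.mulVecLin ≤ LinearMap.ker X.mulVecLin := by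
      intro v hv
      rw [LinearMap.mem_ker, Matrix.mulVecLin_apply] at hv ⊢
      exact (hSker v hv).1
    have hdim : Module.finrank ℝ (LinearMap.ker Xs.mulVecLin) ≤
        Module.finrank ℝ (LinearMap.ker S.mulVecLin) := by
      have := hfr S; rw [hkerXs]; omega
    have heq : LinearMap.ker S.mulVecLin = LinearMap.ker Xs.mulVecLin :=
      Submodule.eq_of_le_of_finrank_le hle1 hdim
    have hXsX : ∀ v, Xs *ᵥ v = 0 → X *ᵥ v = 0 := by
      intro v hv
      have hm : v ∈ LinearMap.ker Xs.mulVecLin := by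
        rw [LinearMap.mem_ker, Matrix.mulVecLin_apply]; exact hv
      rw [← heq] at hm
      have := hle2 hm
      rwa [LinearMap.mem_ker, Matrix.mulVecLin_apply] at this
    have hXsVc : ∀ j, Xs *ᵥ (fun i => (Matrix.fromRows (-U₀ᵀ)
        (1 : Matrix (Fin m) (Fin m) ℝ)) i j) = 0 := by
      intro j
      rw [hcol, hXsV]
      funext i
      simp
    have hXVc := fun j => hXsX _ (hXsVc j)
    apply Matrix.ext
    intro i j
    have h2 := congr_fun ((hcol X (Matrix.fromRows (-U₀ᵀ) 1) j).symm.trans (hXVc j)) i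
    simpa using h2
  · rintro ⟨⟨hH, hAX, Y, hXW⟩, hnorm⟩
    refine ⟨⟨hAX, ?_⟩, hnorm⟩
    rcases Nat.eq_zero_or_pos r with hr0 | hrpos
    · exfalso
      have h0 : Xs.rank = 0 := by have := hmax Xs hXsP.1 hXsP.2; omega
      have h1 := FRaux.svals_nonpos_of_rank_zero h0 (r - 1)
      have h2 := norm_nonneg (X - Xs)
      rw [hσdef] at hnorm
      linarith
    obtain ⟨hσ0, hσle⟩ := FRaux.svals_spec hXsP.2 hrpos hrankXs (by rw [hcard]; omega)
    set E : Matrix (Fin r ⊕ Fin m) (Fin r ⊕ Fin m) ℝ := X - Xs with hE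
    have hEσ : ‖E‖ < σ := hnorm
    have hgap : 0 ≤ σ - ‖E‖ := by linarith
    have hquad : ∀ w : Fin r → ℝ,
        (σ - ‖E‖) * ((U *ᵥ w) ⬝ᵥ (U *ᵥ w)) ≤ (U *ᵥ w) ⬝ᵥ (X *ᵥ (U *ᵥ w)) := by
      intro w
      obtain ⟨u, hu⟩ := hrange w
      have hq1 : σ * ((U *ᵥ w) ⬝ᵥ (U *ᵥ w)) ≤ (U *ᵥ w) ⬝ᵥ (Xs *ᵥ (U *ᵥ w)) := by
        rw [← hu]
        exact FRaux.quad_lower hXsP.2 hσle u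
      have hq2 : -(‖E‖ * ((U *ᵥ w) ⬝ᵥ (U *ᵥ w))) ≤ (U *ᵥ w) ⬝ᵥ (E *ᵥ (U *ᵥ w)) :=
        FRaux.opnorm_quad E (U *ᵥ w)
      have hmv : X *ᵥ (U *ᵥ w) = Xs *ᵥ (U *ᵥ w) + E *ᵥ (U *ᵥ w) := by
        rw [hE, Matrix.sub_mulVec]; abel
      rw [hmv, dotProduct_add]
      have hring : (σ - ‖E‖) * ((U *ᵥ w) ⬝ᵥ (U *ᵥ w)) =
          σ * ((U *ᵥ w) ⬝ᵥ (U *ᵥ w)) - ‖E‖ * ((U *ᵥ w) ⬝ᵥ (U *ᵥ w)) := by ring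
      linarith
    set W : Matrix (Fin r ⊕ Fin m) (Fin m) ℝ :=
      Matrix.fromRows Y (1 : Matrix (Fin m) (Fin m) ℝ) with hWdef
    have hXWv : ∀ z, X *ᵥ (W *ᵥ z) = 0 := by
      intro z; rw [Matrix.mulVec_mulVec, hXW, Matrix.zero_mulVec]
    have hdotnn : ∀ v : (Fin r ⊕ Fin m) → ℝ, 0 ≤ v ⬝ᵥ v := by
      intro v
      simp only [dotProduct]
      exact Finset.sum_nonneg fun i _ => mul_self_nonneg _
    have hUinj : ∀ w : Fin r → ℝ, U *ᵥ w = 0 → w = 0 := by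
      intro w h
      funext i
      have := congr_fun h (Sum.inl i)
      simpa [hU, Matrix.fromRows_mulVec, Matrix.one_mulVec] using this
    have hWinj : ∀ z : Fin m → ℝ, W *ᵥ z = 0 → z = 0 := by
      intro z h
      funext j
      have := congr_fun h (Sum.inr j)
      simpa [hWdef, Matrix.fromRows_mulVec, Matrix.one_mulVec] using this
    have hker0 : ∀ p : (Fin r ⊕ Fin m) → ℝ, Matrix.fromCols U W *ᵥ p = 0 → p = 0 := by
      intro p hp
      have hsplit : U *ᵥ (p ∘ Sum.inl) + W *ᵥ (p ∘ Sum.inr) = 0 := by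
        have h1 : Matrix.fromCols U W *ᵥ Sum.elim (p ∘ Sum.inl) (p ∘ Sum.inr) = 0 := by
          rw [Sum.elim_comp_inl_inr, hp]
        rwa [Matrix.fromCols_mulVec_sumElim] at h1
      have hUx : U *ᵥ (p ∘ Sum.inl) = -(W *ᵥ (p ∘ Sum.inr)) := eq_neg_of_add_eq_zero_left hsplit
      have hX0 : X *ᵥ (U *ᵥ (p ∘ Sum.inl)) = 0 := by
        rw [hUx, Matrix.mulVec_neg, hXWv, neg_zero]
      have hq := hquad (p ∘ Sum.inl)
      rw [hX0, dotProduct_zero] at hq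
      have hpos : 0 < σ - ‖E‖ := by linarith
      have hd0 : (U *ᵥ (p ∘ Sum.inl)) ⬝ᵥ (U *ᵥ (p ∘ Sum.inl)) = 0 := by
        have h1 := hdotnn (U *ᵥ (p ∘ Sum.inl))
        have h2 : 0 ≤ (σ - ‖E‖) * ((U *ᵥ (p ∘ Sum.inl)) ⬝ᵥ (U *ᵥ (p ∘ Sum.inl))) :=
          mul_nonneg (le_of_lt hpos) h1
        have h3 : (σ - ‖E‖) * ((U *ᵥ (p ∘ Sum.inl)) ⬝ᵥ (U *ᵥ (p ∘ Sum.inl))) = 0 :=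
          le_antisymm hq h2
        rcases mul_eq_zero.mp h3 with h | h
        · exact absurd h (ne_of_gt hpos)
        · exact h
      have hUx0 : U *ᵥ (p ∘ Sum.inl) = 0 := dotProduct_self_eq_zero.mp hd0
      have hx0 : p ∘ Sum.inl = 0 := hUinj _ hUx0
      have hWy0 : W *ᵥ (p ∘ Sum.inr) = 0 := by
        rw [hUx0] at hUx
        exact neg_eq_zero.mp hUx.symm
      have hy0 : p ∘ Sum.inr = 0 := hWinj _ hWy0
      funext i
      cases i with
      | inl i => exact congr_fun hx0 i
      | inr j => exact congr_fun hy0 j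
    have hCsurj : Function.Surjective (Matrix.fromCols U W).mulVecLin := by
      rw [← LinearMap.injective_iff_surjective]
      rw [← LinearMap.ker_eq_bot, LinearMap.ker_eq_bot']
      intro p hp
      exact hker0 p (by rwa [Matrix.mulVecLin_apply] at hp)
    refine posSemidef_iff_dotProduct_mulVec.mpr ⟨hH, fun v => ?_⟩
    rw [star_trivial]
    obtain ⟨p, hp⟩ := hCsurj v
    rw [Matrix.mulVecLin_apply] at hp
    have hv : v = U *ᵥ (p ∘ Sum.inl) + W *ᵥ (p ∘ Sum.inr) := by
      rw [← hp, ← Matrix.fromCols_mulVec_sumElim, Sum.elim_comp_inl_inr]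
    have hXv : X *ᵥ v = X *ᵥ (U *ᵥ (p ∘ Sum.inl)) := by
      rw [hv, Matrix.mulVec_add, hXWv, add_zero]
    rw [hXv, hv, add_dotProduct]
    have hXt : Xᵀ = X := by
      rw [← Matrix.conjTranspose_eq_transpose_of_trivial, hH]
    have hcross : (W *ᵥ (p ∘ Sum.inr)) ⬝ᵥ (X *ᵥ (U *ᵥ (p ∘ Sum.inl))) = 0 := by
      rw [Matrix.dotProduct_mulVec]
      have hvm : (W *ᵥ (p ∘ Sum.inr)) ᵥ* X = X *ᵥ (W *ᵥ (p ∘ Sum.inr)) := by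
        rw [← Matrix.mulVec_transpose, hXt]
      rw [hvm, hXWv, zero_dotProduct]
    rw [hcross, add_zero]
    have hq := hquad (p ∘ Sum.inl)
    have := mul_nonneg hgap (hdotnn (U *ᵥ (p ∘ Sum.inl)))
    linarith
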